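/- Characterization of valid spectra (Lemma 2): let v = (v_0, …, v_{N−1}) have entries in K and let V be its FFHT. Then v_i^q = v_i for every i (i.e., all components of v lie in the subfield of K fixed by x ↦ x^q) if and only if V_k^q = V_{(N − qk) mod N} for every k. -/
import Mathlib


open scoped BigOperators

/-- The finite field cosine: `cos_k(∠α^i) = (α^{ik} + α^{-ik})/2`,
where `α^{-ik}` denotes `(α⁻¹)^{ik}`. -/
noncomputable def fcos {K : Type*} [Field K] (α : Kˣ) (k i : ℤ) : K :=
  (((α ^ (i * k) : Kˣ) : K) + ((α⁻¹ ^ (i * k) : Kˣ) : K)) / 2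

/-- The finite field sine: `sin_k(∠α^i) = (α^{ik} - α^{-ik})/(2j)`. -/
noncomputable def fsin {K : Type*} [Field K] (α : Kˣ) (j : K) (k i : ℤ) : K :=
  (((α ^ (i * k) : Kˣ) : K) - ((α⁻¹ ^ (i * k) : Kˣ) : K)) / (2 * j)

/-- The finite field `cas` function: `cas_k(∠α^i) = cos_k(∠α^i) + sin_k(∠α^i)`. -/
noncomputable def fcas {K : Type*} [Field K] (α : Kˣ) (j : K) (k i : ℤ) : K :=
  fcos α k i + fsin α j k i

/-- The finite field Hartley transform of a vector `v` indexed by `ZMod N`: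
`V_k = ∑_{i=0}^{N-1} v_i · cas_k(∠α^i)`. -/
noncomputable def ffht {K : Type*} [Field K] (α : Kˣ) (j : K) {N : ℕ} [NeZero N]
    (v : ZMod N → K) (k : ZMod N) : K :=
  ∑ i : ZMod N, v i * fcas α j (k.val : ℤ) (i.val : ℤ)

section Aux

variable {K : Type*} [Field K] (α : Kˣ)

/-- The exponential character `n ↦ α^n` viewed in `K`. -/
noncomputable def fchi (n : ℤ) : K := ((α ^ n : Kˣ) : K)

lemma fchi_add (a b : ℤ) : (fchi α (a + b) : K) = fchi α a * fchi α b := by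
  simp [fchi, zpow_add]

lemma inv_coe_eq_fchi_neg (n : ℤ) : ((α⁻¹ ^ n : Kˣ) : K) = fchi α (-n) := by
  simp [fchi, inv_zpow, zpow_neg]

lemma fcas_eq (j : K) (hjne : j ≠ 0) (h2 : (2 : K) ≠ 0) (hj : j ^ 2 = -1) (k i : ℤ) :
    fcas α j k i = (1 - j) / 2 * fchi α (i * k) + (1 + j) / 2 * fchi α (-(i * k)) := by
  have hjinv : j⁻¹ = -j := by
    have h1 : (-j) * j = 1 := by linear_combination -hj
    exact inv_eq_of_mul_eq_one_left h1
  rw [fcas, fcos, fsin, inv_coe_eq_fchi_neg]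
  show (fchi α (i*k) + fchi α (-(i*k))) / 2 + (fchi α (i*k) - fchi α (-(i*k))) / (2*j) = _
  rw [div_eq_mul_inv (fchi α (i*k) - fchi α (-(i*k))), mul_inv, hjinv]
  field_simp
  ring

lemma fcas_congr {N : ℕ} (j : K) (hα : orderOf α = N) {k₁ k₂ : ℤ}
    (h : (k₁ : ZMod N) = (k₂ : ZMod N)) (i : ℤ) : fcas α j k₁ i = fcas α j k₂ i := by
  have hz : α ^ (i * k₁) = α ^ (i * k₂) := by
    rw [zpow_eq_zpow_iff_modEq, hα]
    exact Int.ModEq.mul_left i ((ZMod.intCast_eq_intCast_iff k₁ k₂ N).1 h)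
  have hz' : α⁻¹ ^ (i * k₁) = α⁻¹ ^ (i * k₂) := by rw [inv_zpow, inv_zpow, hz]
  simp [fcas, fcos, fsin, hz, hz']

lemma fchi_sum {N : ℕ} [NeZero N] (hα : orderOf α = N) (n : ℤ) :
    ∑ k : ZMod N, (fchi α (n * (k.val : ℤ)) : K)
      = if (n : ZMod N) = 0 then (N : K) else 0 := by
  set x : K := fchi α n with hx
  have hterm : ∀ k : ZMod N, (fchi α (n * (k.val : ℤ)) : K) = x ^ k.val := by
    intro k
    rw [hx, fchi, fchi, ← Units.val_pow_eq_pow_val, ← zpow_natCast (α ^ n) k.val, ← zpow_mul]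
  have hsum : ∑ k : ZMod N, (fchi α (n * (k.val : ℤ)) : K) = ∑ k ∈ Finset.range N, x ^ k := by
    rw [Finset.sum_congr rfl fun k _ => hterm k]
    refine Finset.sum_nbij' (fun k => k.val) (fun k => ((k : ℕ) : ZMod N)) ?_ ?_ ?_ ?_ ?_
    · intro a _; exact Finset.mem_range.2 a.val_lt
    · intro a _; exact Finset.mem_univ _
    · intro a _; simp [ZMod.natCast_val, ZMod.cast_id]
    · intro a ha; exact ZMod.val_cast_of_lt (Finset.mem_range.1 ha)
    · intro a _; rfl
  rw [hsum]
  have hxone : x = 1 ↔ (n : ZMod N) = 0 := by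
    rw [hx, fchi]
    rw [show (1 : K) = ((1 : Kˣ) : K) by simp]
    constructor
    · intro h
      have h1 : α ^ n = 1 := Units.ext h
      rw [ZMod.intCast_zmod_eq_zero_iff_dvd, ← hα]
      exact orderOf_dvd_iff_zpow_eq_one.2 h1
    · intro h
      have hdvd : (N : ℤ) ∣ n := (ZMod.intCast_zmod_eq_zero_iff_dvd n N).1 h
      obtain ⟨c, rfl⟩ := hdvd
      rw [zpow_mul]
      rw [show α ^ (N : ℤ) = 1 by rw [zpow_natCast, ← hα, pow_orderOf_eq_one]]
      simp
  by_cases h : (n : ZMod N) = 0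
  · rw [if_pos h, hxone.2 h]
    simp
  · rw [if_neg h]
    have hxne : x ≠ 1 := fun hx1 => h (hxone.1 hx1)
    rw [geom_sum_eq hxne]
    have hxN : x ^ N = 1 := by
      rw [hx, fchi, ← Units.val_pow_eq_pow_val, ← zpow_natCast (α ^ n) N, ← zpow_mul,
        mul_comm, zpow_mul, zpow_natCast, ← hα, pow_orderOf_eq_one]
      simp
    rw [hxN, sub_self, zero_div]

lemma fcas_orth {N : ℕ} [NeZero N] (j : K) (hjne : j ≠ 0) (h2 : (2 : K) ≠ 0)
    (hj : j ^ 2 = -1) (hα : orderOf α = N) (i i' : ZMod N) :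
    ∑ k : ZMod N, fcas α j (k.val : ℤ) (i.val : ℤ) * fcas α j (k.val : ℤ) (i'.val : ℤ)
      = if i = i' then (N : K) else 0 := by
  set a : K := (1 - j) / 2 with ha
  set b : K := (1 + j) / 2 with hb
  set A : ℤ := (i.val : ℤ) with hA
  set B : ℤ := (i'.val : ℤ) with hB
  have hterm : ∀ k : ZMod N,
      fcas α j (k.val : ℤ) A * fcas α j (k.val : ℤ) B
        = a * a * fchi α ((A + B) * k.val) + a * b * fchi α ((A - B) * k.val)
          + a * b * fchi α ((B - A) * k.val) + b * b * fchi α ((-(A + B)) * k.val) := by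
    intro k
    rw [fcas_eq α j hjne h2 hj, fcas_eq α j hjne h2 hj]
    have e1 : (fchi α ((A + B) * k.val) : K) = fchi α (A * k.val) * fchi α (B * k.val) := by
      rw [← fchi_add]; congr 1; ring
    have e2 : (fchi α ((A - B) * k.val) : K) = fchi α (A * k.val) * fchi α (-(B * k.val)) := by
      rw [← fchi_add]; congr 1; ring
    have e3 : (fchi α ((B - A) * k.val) : K) = fchi α (-(A * k.val)) * fchi α (B * k.val) := by
      rw [← fchi_add]; congr 1; ring
    have e4 : (fchi α ((-(A + B)) * k.val) : K)
        = fchi α (-(A * k.val)) * fchi α (-(B * k.val)) := by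
      rw [← fchi_add]; congr 1; ring
    rw [e1, e2, e3, e4, ← ha, ← hb]
    ring
  rw [Finset.sum_congr rfl fun k _ => hterm k]
  rw [Finset.sum_add_distrib, Finset.sum_add_distrib, Finset.sum_add_distrib,
    ← Finset.mul_sum, ← Finset.mul_sum, ← Finset.mul_sum, ← Finset.mul_sum,
    fchi_sum α hα, fchi_sum α hα, fchi_sum α hα, fchi_sum α hα]
  have hcastA : ((A : ZMod N)) = i := by simp [hA, ZMod.natCast_val, ZMod.cast_id]
  have hcastB : ((B : ZMod N)) = i' := by simp [hB, ZMod.natCast_val, ZMod.cast_id]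
  have c1 : ((A + B : ℤ) : ZMod N) = 0 ↔ i + i' = 0 := by
    push_cast [hcastA, hcastB]; tauto
  have c2 : ((A - B : ℤ) : ZMod N) = 0 ↔ i = i' := by
    push_cast [hcastA, hcastB]; rw [sub_eq_zero]
  have c3 : ((B - A : ℤ) : ZMod N) = 0 ↔ i = i' := by
    push_cast [hcastA, hcastB]; rw [sub_eq_zero, eq_comm]
  have c4 : ((-(A + B) : ℤ) : ZMod N) = 0 ↔ i + i' = 0 := by
    push_cast [hcastA, hcastB]; rw [neg_eq_zero]
  rw [if_congr c1 rfl rfl, if_congr c2 rfl rfl, if_congr c3 rfl rfl, if_congr c4 rfl rfl]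
  have haabb : a * a + b * b = 0 := by
    rw [ha, hb]; field_simp; linear_combination 2 * hj
  have hab : a * b + a * b = 1 := by
    rw [ha, hb]; field_simp; linear_combination (-2 : K) * hj
  by_cases h1 : i + i' = 0 <;> by_cases h5 : i = i'
  · simp only [if_pos h1, if_pos h5]
    linear_combination (N : K) * haabb + (N : K) * hab
  · simp only [if_pos h1, if_neg h5]
    linear_combination (N : K) * haabb
  · simp only [if_neg h1, if_pos h5]
    linear_combination (N : K) * hab
  · simp only [if_neg h1, if_neg h5]
    ring

lemma ffht_inversion_zero {N : ℕ} [NeZero N] (j : K) (hjne : j ≠ 0) (h2 : (2 : K) ≠ 0)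
    (hj : j ^ 2 = -1) (hα : orderOf α = N) (hNK : (N : K) ≠ 0) (w : ZMod N → K)
    (h0 : ∀ c : ZMod N, ∑ i : ZMod N, w i * fcas α j (c.val : ℤ) (i.val : ℤ) = 0)
    (i₀ : ZMod N) : w i₀ = 0 := by
  have hsum : ∑ c : ZMod N,
      (∑ i : ZMod N, w i * fcas α j (c.val : ℤ) (i.val : ℤ))
        * fcas α j (c.val : ℤ) (i₀.val : ℤ) = 0 :=
    Finset.sum_eq_zero fun c _ => by rw [h0 c, zero_mul]
  rw [Finset.sum_congr rfl (fun c _ => Finset.sum_mul _ _ _), Finset.sum_comm] at hsum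
  have hstep : ∀ i : ZMod N,
      ∑ c : ZMod N, w i * fcas α j (c.val : ℤ) (i.val : ℤ) * fcas α j (c.val : ℤ) (i₀.val : ℤ)
        = w i * (if i = i₀ then (N : K) else 0) := by
    intro i
    rw [← fcas_orth α j hjne h2 hj hα i i₀, Finset.mul_sum]
    exact Finset.sum_congr rfl fun c _ => by ring
  rw [Finset.sum_congr rfl fun i _ => hstep i] at hsum
  simp only [mul_ite, mul_zero, Finset.sum_ite_eq', Finset.mem_univ, if_true] at hsum
  exact (mul_eq_zero.1 hsum).resolve_right hNK

end Aux

/-- Lemma 2, valid spectra: the entries of `v` all satisfy `v_i^q = v_i`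
iff the spectrum satisfies `V_k^q = V_{(N - qk) mod N}` for every `k`. -/
theorem ffht_valid_spectra (p : ℕ) (hp : p.Prime) (hpodd : Odd p) (r : ℕ) (hr : 1 ≤ r)
    (q : ℕ) (hq : q = p ^ r)
    (K : Type*) [Field K] [Fintype K] [CharP K p] (m : ℕ) (hm : 1 ≤ m)
    (hcard : Fintype.card K = q ^ m)
    (j : K) (hj : j ^ 2 = -1) (hjq : j ^ q = -j)
    (α : Kˣ) (N : ℕ) [NeZero N] (hα : orderOf α = N)
    (v V : ZMod N → K) (hV : ∀ k, V k = ffht α j v k) :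
    (∀ i : ZMod N, v i ^ q = v i) ↔
      (∀ k : ZMod N, V k ^ q = V (-((q : ZMod N) * k))) := by
  haveI := Fact.mk hp
  have hp2 : p ≠ 2 := by
    rcases hpodd with ⟨t, ht⟩; omega
  have h2 : (2 : K) ≠ 0 := by
    intro h
    rw [show (2 : K) = ((2 : ℕ) : K) by norm_num, CharP.cast_eq_zero_iff K p] at h
    have := Nat.le_of_dvd (by norm_num) h
    have := hp.two_le
    omega
  have hjne : j ≠ 0 := by
    intro h; rw [h] at hj; simp at hj
  haveI : DecidableEq K := Classical.decEq K
  have hNdvd : N ∣ q ^ m - 1 := by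
    rw [← hα, ← hcard]
    have := orderOf_dvd_card (x := α)
    rwa [Fintype.card_units] at this
  have hqm1 : 1 ≤ q ^ m := Nat.one_le_pow _ _ (by rw [hq]; exact pow_pos hp.pos r)
  have hpN : ¬ p ∣ N := by
    intro hdvd
    have h1 : p ∣ q ^ m - 1 := hdvd.trans hNdvd
    have h2' : p ∣ q ^ m := by
      rw [hq, ← pow_mul]
      exact dvd_pow_self p (by positivity)
    have hone : p ∣ 1 := by
      have := Nat.dvd_sub h2' h1
      rwa [Nat.sub_sub_self hqm1] at this
    have := Nat.le_of_dvd (by norm_num) hone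
    have := hp.two_le
    omega
  have hNK : (N : K) ≠ 0 := by
    intro h; exact hpN ((CharP.cast_eq_zero_iff K p N).1 h)
  have hqN : Nat.Coprime q N := by
    rw [hq]
    exact Nat.Coprime.pow_left r ((Nat.Prime.coprime_iff_not_dvd hp).2 hpN)
  have hphi : ∀ x : K, x ^ q = iterateFrobenius K p r x := by
    intro x; rw [iterateFrobenius_def, hq]
  have hfrobj : ((1 - j) / 2 : K) ^ q = (1 + j) / 2 := by
    rw [hphi, map_div₀, map_sub, map_one, map_ofNat, ← hphi j, hjq]; ring
  have hfrobj' : ((1 + j) / 2 : K) ^ q = (1 - j) / 2 := by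
    rw [hphi, map_div₀, map_add, map_one, map_ofNat, ← hphi j, hjq]; ring
  have hfchi : ∀ n : ℤ, (fchi α n : K) ^ q = fchi α (n * q) := by
    intro n
    rw [fchi, fchi, ← Units.val_pow_eq_pow_val, ← zpow_natCast (α ^ n) q, ← zpow_mul]
  have hfrob : ∀ k i : ℤ, fcas α j k i ^ q = fcas α j (-((q : ℤ) * k)) i := by
    intro k i
    rw [fcas_eq α j hjne h2 hj, fcas_eq α j hjne h2 hj, hq, add_pow_char_pow, mul_pow, mul_pow,
      ← hq, hfrobj, hfrobj', hfchi, hfchi,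
      show -(i * -((q : ℤ) * k)) = i * k * q by ring,
      show i * -((q : ℤ) * k) = -(i * k) * q by ring]
    ring
  have key : ∀ k : ZMod N, V k ^ q - V (-((q : ZMod N) * k))
      = ∑ i : ZMod N, (v i ^ q - v i)
          * fcas α j (((-((q : ZMod N) * k)).val : ℤ)) ((i.val : ℤ)) := by
    intro k
    rw [hV, hV, ffht, ffht]
    have hcongr : ∀ i : ZMod N,
        fcas α j (-((q : ℤ) * (k.val : ℤ))) (i.val : ℤ)
          = fcas α j (((-((q : ZMod N) * k)).val : ℤ)) (i.val : ℤ) := by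
      intro i
      apply fcas_congr α j hα
      push_cast
      simp [ZMod.natCast_val, ZMod.cast_id]
    have hpow : (∑ i : ZMod N, v i * fcas α j ((k.val : ℤ)) ((i.val : ℤ))) ^ q
        = ∑ i : ZMod N, (v i) ^ q * fcas α j (((-((q : ZMod N) * k)).val : ℤ)) ((i.val : ℤ)) := by
      rw [hphi, map_sum]
      refine Finset.sum_congr rfl fun i _ => ?_
      rw [map_mul, ← hphi, ← hphi, hfrob, hcongr]
    rw [hpow, ← Finset.sum_sub_distrib]
    exact Finset.sum_congr rfl fun i _ => by ring
  constructor
  · intro hv k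
    have hk := key k
    rw [Finset.sum_eq_zero (fun i _ => by rw [hv i, sub_self, zero_mul])] at hk
    exact sub_eq_zero.1 hk
  · intro hVk i₀
    have h0 : ∀ c : ZMod N,
        ∑ i : ZMod N, (v i ^ q - v i) * fcas α j ((c.val : ℤ)) ((i.val : ℤ)) = 0 := by
      intro c
      set u : (ZMod N)ˣ := ZMod.unitOfCoprime q hqN with hu
      have hucoe : ((u : ZMod N)) = (q : ZMod N) := ZMod.coe_unitOfCoprime q hqN
      set k : ZMod N := -(((u⁻¹ : (ZMod N)ˣ) : ZMod N) * c) with hk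
      have hkc : -((q : ZMod N) * k) = c := by
        rw [hk, ← hucoe, mul_neg, neg_neg, ← mul_assoc, ← Units.val_mul, mul_inv_cancel]
        simp
      have hkey := key k
      rw [hVk k, sub_self, hkc] at hkey
      exact hkey.symm
    have := ffht_inversion_zero α j hjne h2 hj hα hNK _ h0 i₀
    exact sub_eq_zero.1 this
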